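/- Let δ_{1,t} and δ_{2,t} be dilations (with positive exponents) on ℝ^{n_1} and ℝ^{n_2} respectively, and let Φ : ℝ^{n_1} → ℝ^{n_2} be a continuous map satisfying Φ ∘ δ_{1,t} = δ_{2,t} ∘ Φ for all t > 0. Then Φ is a proper map (preimages of compact sets are compact) if and only if Φ(x) = 0 implies x = 0. Moreover, in that case, for every δ_{2,t}-homogeneous norm |·|_{δ_2} on ℝ^{n_2}, the function x ↦ |Φ(x)|_{δ_2} is a δ_{1,t}-homogeneous norm on ℝ^{n_1}. -/

import Mathlib

/-!
A map commuting with the dilations sends `0` to `0`, and `Φ⁻¹ {0}` is invariant under the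
dilations of the source. Since the dilation orbit of a nonzero point is unbounded, a compact
`Φ⁻¹ {0}` must be `{0}`. Conversely, if `Φ⁻¹ {0} = {0}`, then `N ∘ Φ` is a homogeneous norm for
every homogeneous norm `N` of the target. Every homogeneous norm dominates a multiple of
`ρ x = ∑ i, |x i| ^ (1 / λ i)` (compare them on the compact level set `ρ = 1` and rescale), so its
sublevel sets are bounded. Applied to `ρ ∘ Φ`, this bounds `Φ⁻¹ K` for compact `K`.
-/

open Filter Bornology Topology

section Dilation

variable {ι : Type*} {lam : ι → ℝ}

noncomputable def dilate (lam : ι → ℝ) (t : ℝ) (x : ι → ℝ) : ι → ℝ := fun i => t ^ lam i * x i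

theorem dilate_dilate {s t : ℝ} (hs : 0 ≤ s) (ht : 0 ≤ t) (x : ι → ℝ) :
    dilate lam s (dilate lam t x) = dilate lam (s * t) x := by
  funext i
  simp only [dilate, Real.mul_rpow hs ht, mul_assoc]

theorem dilate_inv_dilate {t : ℝ} (ht : 0 < t) (x : ι → ℝ) :
    dilate lam t (dilate lam t⁻¹ x) = x := by
  rw [dilate_dilate ht.le (inv_nonneg.2 ht.le), mul_inv_cancel₀ ht.ne']
  funext i
  simp [dilate]

theorem eq_zero_of_dilate_eq_self (hlam : ∀ i, 0 < lam i) {t : ℝ} (ht : 1 < t) {y : ι → ℝ}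
    (h : dilate lam t y = y) : y = 0 := by
  funext i
  have hfix : t ^ lam i * y i = y i := congrFun h i
  have hi : (t ^ lam i - 1) * y i = 0 := by linear_combination hfix
  exact (mul_eq_zero.1 hi).resolve_left (sub_ne_zero.2 (Real.one_lt_rpow ht (hlam i)).ne')

theorem map_zero_of_dilate_comm {κ : Type*} {mu : κ → ℝ} (hmu : ∀ j, 0 < mu j)
    {Φ : (ι → ℝ) → κ → ℝ} (hΦ : ∀ t, 0 < t → ∀ x, Φ (dilate lam t x) = dilate mu t (Φ x)) :
    Φ 0 = 0 := by
  refine eq_zero_of_dilate_eq_self hmu one_lt_two ?_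
  rw [← hΦ 2 two_pos]
  congr 1
  funext i
  simp [dilate]

variable [Fintype ι]

theorem tendsto_norm_dilate_atTop (hlam : ∀ i, 0 < lam i) {x : ι → ℝ} (hx : x ≠ 0) :
    Tendsto (fun t => ‖dilate lam t x‖) atTop atTop := by
  obtain ⟨i, hi⟩ := Function.ne_iff.1 hx
  have hcoord : Tendsto (fun t : ℝ => t ^ lam i * |x i|) atTop atTop :=
    (tendsto_rpow_atTop (hlam i)).atTop_mul_const (abs_pos.2 hi)
  refine tendsto_atTop_mono' _ ?_ hcoord
  filter_upwards [eventually_gt_atTop 0] with t ht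
  calc t ^ lam i * |x i| = ‖dilate lam t x i‖ := by
        rw [dilate, Real.norm_eq_abs, abs_mul, abs_of_pos (Real.rpow_pos_of_pos ht _)]
    _ ≤ ‖dilate lam t x‖ := norm_le_pi_norm _ i

theorem eq_zero_of_isBounded_of_dilate_mem (hlam : ∀ i, 0 < lam i) {s : Set (ι → ℝ)}
    (hs : IsBounded s) (hdil : ∀ t, 0 < t → ∀ x ∈ s, dilate lam t x ∈ s) {x : ι → ℝ}
    (hx : x ∈ s) : x = 0 := by
  by_contra hx0
  have hesc := tendsto_norm_atTop_iff_cobounded.1 (tendsto_norm_dilate_atTop hlam hx0)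
  obtain ⟨t, ht, htout⟩ := ((eventually_gt_atTop 0).and (hesc.eventually hs.compl)).exists
  exact htout (hdil t ht x hx)

end Dilation

section HomogeneousNorm

variable {ι : Type*} {lam : ι → ℝ}

structure IsHomogeneousNorm (lam : ι → ℝ) (N : (ι → ℝ) → ℝ) : Prop where
  continuous : Continuous N
  nonneg : ∀ x, 0 ≤ N x
  eq_zero_iff : ∀ x, N x = 0 ↔ x = 0
  map_dilate : ∀ t, 0 < t → ∀ x, N (dilate lam t x) = t * N x

theorem IsHomogeneousNorm.comp {κ : Type*} {mu : κ → ℝ} (hmu : ∀ j, 0 < mu j)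
    {N : (κ → ℝ) → ℝ} (hN : IsHomogeneousNorm mu N) {Φ : (ι → ℝ) → κ → ℝ} (hΦc : Continuous Φ)
    (hΦ : ∀ t, 0 < t → ∀ x, Φ (dilate lam t x) = dilate mu t (Φ x))
    (hker : ∀ x, Φ x = 0 → x = 0) : IsHomogeneousNorm lam (N ∘ Φ) where
  continuous := hN.continuous.comp hΦc
  nonneg x := hN.nonneg (Φ x)
  eq_zero_iff x := by
    rw [Function.comp_apply, hN.eq_zero_iff]
    exact ⟨hker x, fun hx => hx ▸ map_zero_of_dilate_comm hmu hΦ⟩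
  map_dilate t ht x := by
    rw [Function.comp_apply, hΦ t ht, hN.map_dilate t ht]
    rfl

theorem IsHomogeneousNorm.pos {N : (ι → ℝ) → ℝ} (hN : IsHomogeneousNorm lam N) {x : ι → ℝ}
    (hx : x ≠ 0) : 0 < N x :=
  (hN.nonneg x).lt_of_ne' (mt (hN.eq_zero_iff x).1 hx)

theorem IsHomogeneousNorm.exists_pos_mul_le {N M : (ι → ℝ) → ℝ} (hN : IsHomogeneousNorm lam N)
    (hM : IsHomogeneousNorm lam M) (hS : IsCompact {y | M y = 1}) :
    ∃ m > 0, ∀ x, m * M x ≤ N x := by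
  have hNS : ∀ y ∈ {y | M y = 1}, 0 < N y := fun y hy =>
    hN.pos fun h => by simp [h, (hM.eq_zero_iff 0).2] at hy
  obtain ⟨m, hm, hmS⟩ := hS.exists_forall_le' hN.continuous.continuousOn hNS
  refine ⟨m, hm, fun x => ?_⟩
  rcases eq_or_ne x 0 with rfl | hx
  · simpa [(hM.eq_zero_iff 0).2] using hN.nonneg 0
  set r := M x
  have hr : 0 < r := hM.pos hx
  have hy : M (dilate lam r⁻¹ x) = 1 := by
    rw [hM.map_dilate _ (inv_pos.2 hr), inv_mul_cancel₀ hr.ne']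
  calc m * r ≤ N (dilate lam r⁻¹ x) * r := mul_le_mul_of_nonneg_right (hmS _ hy) hr.le
    _ = N x := by
      rw [mul_comm, ← hN.map_dilate r hr, dilate_inv_dilate hr]

variable [Fintype ι]

noncomputable def standardHomogeneousNorm (lam : ι → ℝ) (x : ι → ℝ) : ℝ := ∑ i, |x i| ^ (lam i)⁻¹

theorem isHomogeneousNorm_standardHomogeneousNorm (hlam : ∀ i, 0 < lam i) :
    IsHomogeneousNorm lam (standardHomogeneousNorm lam) where
  continuous := continuous_finsetSum _ fun i _ =>
    (continuous_apply i).abs.rpow_const fun _ => Or.inr (inv_nonneg.2 (hlam i).le)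
  nonneg x := Finset.sum_nonneg fun i _ => Real.rpow_nonneg (abs_nonneg _) _
  eq_zero_iff x := by
    simp only [standardHomogeneousNorm, Finset.sum_eq_zero_iff_of_nonneg
      (fun i _ => Real.rpow_nonneg (abs_nonneg (x i)) _), Finset.mem_univ, true_imp_iff,
      Real.rpow_eq_zero (abs_nonneg _) (inv_ne_zero (hlam _).ne'), abs_eq_zero, funext_iff,
      Pi.zero_apply]
  map_dilate t ht x := by
    simp only [standardHomogeneousNorm, dilate, Finset.mul_sum]
    refine Finset.sum_congr rfl fun i _ => ?_
    rw [abs_mul, abs_of_pos (Real.rpow_pos_of_pos ht _), Real.mul_rpow (by positivity)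
      (abs_nonneg _), Real.rpow_rpow_inv ht.le (hlam i).ne']

theorem abs_le_rpow_of_standardHomogeneousNorm_le (hlam : ∀ i, 0 < lam i) {x : ι → ℝ} {R : ℝ}
    (hx : standardHomogeneousNorm lam x ≤ R) (i : ι) : |x i| ≤ R ^ lam i := by
  have hi : |x i| ^ (lam i)⁻¹ ≤ R :=
    (Finset.single_le_sum (f := fun j => |x j| ^ (lam j)⁻¹)
      (fun j _ => Real.rpow_nonneg (abs_nonneg (x j)) _)
      (Finset.mem_univ i)).trans hx
  exact (Real.rpow_inv_le_iff_of_pos (abs_nonneg _)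
    ((Real.rpow_nonneg (abs_nonneg _) _).trans hi) (hlam i)).1 hi

theorem isBounded_standardHomogeneousNorm_le (hlam : ∀ i, 0 < lam i) (R : ℝ) :
    IsBounded {x | standardHomogeneousNorm lam x ≤ R} := by
  refine (IsBounded.pi fun i => Metric.isBounded_closedBall (x := 0) (r := R ^ lam i)).subset ?_
  intro x hx i _
  rw [mem_closedBall_zero_iff, Real.norm_eq_abs]
  exact abs_le_rpow_of_standardHomogeneousNorm_le hlam hx i

theorem IsHomogeneousNorm.isBounded_le (hlam : ∀ i, 0 < lam i) {N : (ι → ℝ) → ℝ}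
    (hN : IsHomogeneousNorm lam N) (c : ℝ) : IsBounded {x | N x ≤ c} := by
  have hρ := isHomogeneousNorm_standardHomogeneousNorm hlam
  have hS : IsCompact {y | standardHomogeneousNorm lam y = 1} :=
    Metric.isCompact_of_isClosed_isBounded (isClosed_eq hρ.continuous continuous_const)
      ((isBounded_standardHomogeneousNorm_le hlam 1).subset fun y hy => hy.le)
  obtain ⟨m, hm, hmN⟩ := hN.exists_pos_mul_le hρ hS
  refine (isBounded_standardHomogeneousNorm_le hlam (c / m)).subset fun x hx => ?_
  change standardHomogeneousNorm lam x ≤ c / m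
  rw [le_div_iff₀' hm]
  exact (hmN x).trans hx

end HomogeneousNorm

section ProperMap

variable {ι κ : Type*} [Fintype ι] {lam : ι → ℝ} {mu : κ → ℝ}
  {Φ : (ι → ℝ) → κ → ℝ}

theorem eq_zero_of_isCompact_preimage_zero (hlam : ∀ i, 0 < lam i)
    (hΦ : ∀ t, 0 < t → ∀ x, Φ (dilate lam t x) = dilate mu t (Φ x))
    (hK : IsCompact (Φ ⁻¹' {0})) {x : ι → ℝ} (hx : Φ x = 0) : x = 0 := by
  refine eq_zero_of_isBounded_of_dilate_mem hlam hK.isBounded (fun t ht y hy => ?_) hx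
  simp only [Set.mem_preimage, Set.mem_singleton_iff] at hy ⊢
  rw [hΦ t ht, hy]
  funext j
  simp [dilate]

theorem isCompact_preimage_of_dilate_comm [Fintype κ] (hlam : ∀ i, 0 < lam i) (hmu : ∀ j, 0 < mu j)
    (hΦc : Continuous Φ) (hΦ : ∀ t, 0 < t → ∀ x, Φ (dilate lam t x) = dilate mu t (Φ x))
    (hker : ∀ x, Φ x = 0 → x = 0) {K : Set (κ → ℝ)} (hK : IsCompact K) :
    IsCompact (Φ ⁻¹' K) := by
  have hρ := isHomogeneousNorm_standardHomogeneousNorm hmu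
  obtain ⟨c, hc⟩ := hK.bddAbove_image hρ.continuous.continuousOn
  refine Metric.isCompact_of_isClosed_isBounded (hK.isClosed.preimage hΦc) ?_
  exact ((hρ.comp hmu hΦc hΦ hker).isBounded_le hlam c).subset fun x hx => hc ⟨Φ x, hx, rfl⟩

end ProperMap

/-- Let `Φ : ℝ^{n₁} → ℝ^{n₂}` be continuous and homogeneous with respect to dilations
`δ_{1,t}`, `δ_{2,t}` (with positive exponents). Then `Φ` is proper iff `Φ(x) = 0` implies
`x = 0`; and in that case, for every `δ_{2,t}`-homogeneous norm `N₂` on `ℝ^{n₂}`, the function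
`x ↦ N₂(Φ(x))` is a `δ_{1,t}`-homogeneous norm on `ℝ^{n₁}`. -/
theorem homogeneous_map_proper_iff
    (n₁ n₂ : ℕ) (lam₁ : Fin n₁ → ℝ) (lam₂ : Fin n₂ → ℝ)
    (hlam₁ : ∀ i, 0 < lam₁ i) (hlam₂ : ∀ i, 0 < lam₂ i)
    (Φ : (Fin n₁ → ℝ) → (Fin n₂ → ℝ)) (hΦc : Continuous Φ)
    (hΦh : ∀ t : ℝ, 0 < t → ∀ x,
      Φ (fun i => t ^ lam₁ i * x i) = fun i => t ^ lam₂ i * Φ x i) :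
    ((∀ K : Set (Fin n₂ → ℝ), IsCompact K → IsCompact (Φ ⁻¹' K)) ↔
      ∀ x, Φ x = 0 → x = 0) ∧
    ((∀ x, Φ x = 0 → x = 0) →
      ∀ N₂ : (Fin n₂ → ℝ) → ℝ, Continuous N₂ → (∀ y, 0 ≤ N₂ y) →
        (∀ y, N₂ y = 0 ↔ y = 0) →
        (∀ t : ℝ, 0 < t → ∀ y, N₂ (fun i => t ^ lam₂ i * y i) = t * N₂ y) →
        Continuous (fun x => N₂ (Φ x)) ∧ (∀ x, 0 ≤ N₂ (Φ x)) ∧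
          (∀ x, N₂ (Φ x) = 0 ↔ x = 0) ∧
          ∀ t : ℝ, 0 < t → ∀ x, N₂ (Φ (fun i => t ^ lam₁ i * x i)) = t * N₂ (Φ x)) := by
  have hΦ : ∀ t, 0 < t → ∀ x, Φ (dilate lam₁ t x) = dilate lam₂ t (Φ x) := hΦh
  refine ⟨⟨fun hproper => ?_, fun hker K hK => ?_⟩, fun hker N₂ hc hnn h0 hh => ?_⟩
  · exact fun x => eq_zero_of_isCompact_preimage_zero hlam₁ hΦ (hproper _ isCompact_singleton)
  · exact isCompact_preimage_of_dilate_comm hlam₁ hlam₂ hΦc hΦ hker hK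
  · have hN : IsHomogeneousNorm lam₂ N₂ := ⟨hc, hnn, h0, hh⟩
    obtain ⟨hcont, hnonneg, hzero, hdil⟩ := hN.comp hlam₂ hΦc hΦ hker
    exact ⟨hcont, hnonneg, hzero, hdil⟩
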